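/- arXiv:0912.2299 — 3 statements merged into one kernel-verified Lean document; each statement's English description precedes it below -/
import Mathlib

section
/- Let I = diag(A,A,C) with A,C > 0, U: ℝ³ → ℝ a smooth potential satisfying the axial symmetry condition R₁ ∂U/∂R₂ − R₂ ∂U/∂R₁ = 0 for all R, and let A₃ be any rotation about the third axis. If (R,P,G) solves the Newton–Euler system Ṙ = R×Ω + P, Ṗ = P×Ω − ∂U/∂R, Ġ = G×Ω + R×∂U/∂R with Ω = I⁻¹G, then (A₃R, A₃P, A₃G) also solves the same system. Moreover the symmetry condition implies ∂U/∂R(A₃R) = A₃ ∂U/∂R(R). -/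
open Matrix

/-- The gradient of a potential `U : ℝ³ → ℝ`. -/
noncomputable def grad (U : (Fin 3 → ℝ) → ℝ) (x : Fin 3 → ℝ) : Fin 3 → ℝ :=
  fun i => fderiv ℝ U x (Pi.single i 1)

/-- Rotation by angle `φ` about the third axis. -/
noncomputable def rot3 (φ : ℝ) : Matrix (Fin 3) (Fin 3) ℝ :=
  !![Real.cos φ, -Real.sin φ, 0; Real.sin φ, Real.cos φ, 0; 0, 0, 1]

/-- Angular velocity `Ω = I⁻¹ G` for the symmetric inertia tensor `I = diag(A,A,C)`. -/
noncomputable def omegaOf (A C : ℝ) (G : Fin 3 → ℝ) : Fin 3 → ℝ :=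
  ![G 0 / A, G 1 / A, G 2 / C]

lemma rot3_mulVec (φ : ℝ) (v : Fin 3 → ℝ) :
    (rot3 φ).mulVec v = ![Real.cos φ * v 0 - Real.sin φ * v 1,
      Real.sin φ * v 0 + Real.cos φ * v 1, v 2] := by
  funext i
  fin_cases i <;> simp [rot3, mulVec, dotProduct, Fin.sum_univ_three] <;> ring

lemma omega_equiv (A C φ : ℝ) (g : Fin 3 → ℝ) :
    omegaOf A C ((rot3 φ).mulVec g) = (rot3 φ).mulVec (omegaOf A C g) := by
  funext i
  fin_cases i <;> simp [rot3_mulVec, omegaOf] <;> ring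

lemma cross_equiv (φ : ℝ) (a b : Fin 3 → ℝ) :
    ((rot3 φ).mulVec a) ⨯₃ ((rot3 φ).mulVec b) = (rot3 φ).mulVec (a ⨯₃ b) := by
  have h := Real.sin_sq_add_cos_sq φ
  funext i
  fin_cases i
  · simp [rot3_mulVec, crossProduct]
    ring
  · simp [rot3_mulVec, crossProduct]
    ring
  · simp [rot3_mulVec, crossProduct]
    linear_combination (a 0 * b 1 - a 1 * b 0) * h

lemma rot3_mul_transpose (φ : ℝ) : rot3 φ * (rot3 φ)ᵀ = 1 := by
  have h := Real.sin_sq_add_cos_sq φ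
  have ht : (rot3 φ)ᵀ = !![Real.cos φ, Real.sin φ, 0;
      -Real.sin φ, Real.cos φ, 0; 0, 0, 1] := by
    ext i j
    fin_cases i <;> fin_cases j <;> simp [rot3]
  rw [ht, rot3]
  rw [Matrix.mul_fin_three]
  rw [Matrix.one_fin_three]
  ext i j
  fin_cases i <;> fin_cases j <;> simp [Matrix.vecHead, Matrix.vecTail] <;> nlinarith [h]

lemma fderiv_eq_sum (U : (Fin 3 → ℝ) → ℝ) (y v : Fin 3 → ℝ) :
    (fderiv ℝ U y) v = ∑ i, v i * grad U y i := by
  have hv : v = ∑ i : Fin 3, v i • (Pi.single i 1 : Fin 3 → ℝ) := by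
    funext j
    simp [Finset.sum_apply, Pi.single_apply]
  conv_lhs => rw [hv]
  rw [map_sum]
  simp [grad, smul_eq_mul]

lemma U_invariant (U : (Fin 3 → ℝ) → ℝ) (hU : ContDiff ℝ (⊤ : ℕ∞) U)
    (hsym : ∀ x : Fin 3 → ℝ, x 0 * grad U x 1 - x 1 * grad U x 0 = 0)
    (φ : ℝ) (x : Fin 3 → ℝ) : U ((rot3 φ).mulVec x) = U x := by
  set c : ℝ → Fin 3 → ℝ := fun θ => (rot3 θ).mulVec x with hc
  have hcd : ∀ θ, HasDerivAt c
      (![-(Real.sin θ) * x 0 - Real.cos θ * x 1,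
         Real.cos θ * x 0 - Real.sin θ * x 1, 0]) θ := by
    intro θ
    rw [hasDerivAt_pi]
    intro i
    have hsin := Real.hasDerivAt_sin θ
    have hcos := Real.hasDerivAt_cos θ
    fin_cases i
    · have : HasDerivAt (fun θ => Real.cos θ * x 0 - Real.sin θ * x 1)
          (-(Real.sin θ) * x 0 - Real.cos θ * x 1) θ :=
        ((hcos.mul_const (x 0)).sub (hsin.mul_const (x 1)))
      exact this.congr_of_eventuallyEq
        (Filter.Eventually.of_forall fun θ => by simp [hc, rot3_mulVec])
    · have : HasDerivAt (fun θ => Real.sin θ * x 0 + Real.cos θ * x 1)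
          (Real.cos θ * x 0 - Real.sin θ * x 1) θ := by
        have := (hsin.mul_const (x 0)).add (hcos.mul_const (x 1))
        exact this.congr_deriv (by ring)
      exact this.congr_of_eventuallyEq
        (Filter.Eventually.of_forall fun θ => by simp [hc, rot3_mulVec])
    · have : HasDerivAt (fun _ : ℝ => x 2) 0 θ := hasDerivAt_const θ (x 2)
      exact this.congr_of_eventuallyEq
        (Filter.Eventually.of_forall fun θ => by simp [hc, rot3_mulVec])
  have hg : ∀ θ, HasDerivAt (fun θ => U (c θ)) 0 θ := by
    intro θ
    have hd := ((hU.differentiable (by simp) (c θ)).hasFDerivAt).comp_hasDerivAt θ (hcd θ)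
    have : (fderiv ℝ U (c θ)) (![-(Real.sin θ) * x 0 - Real.cos θ * x 1,
        Real.cos θ * x 0 - Real.sin θ * x 1, 0]) = 0 := by
      rw [fderiv_eq_sum]
      have h1 : c θ 0 = Real.cos θ * x 0 - Real.sin θ * x 1 := by simp [hc, rot3_mulVec]
      have h2 : c θ 1 = Real.sin θ * x 0 + Real.cos θ * x 1 := by simp [hc, rot3_mulVec]
      have := hsym (c θ)
      rw [h1, h2] at this
      simp [Fin.sum_univ_three]
      linarith [this]
    rwa [this] at hd
  have hconst : U (c φ) = U (c 0) :=
    is_const_of_deriv_eq_zero (fun θ => (hg θ).differentiableAt)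
      (fun θ => (hg θ).deriv) φ 0
  have h0 : c 0 = x := by
    funext i
    fin_cases i <;> simp [hc, rot3_mulVec]
  have : U (c φ) = U x := by rw [hconst, h0]
  exact this

lemma grad_equiv (U : (Fin 3 → ℝ) → ℝ) (hU : ContDiff ℝ (⊤ : ℕ∞) U)
    (hsym : ∀ x : Fin 3 → ℝ, x 0 * grad U x 1 - x 1 * grad U x 0 = 0)
    (φ : ℝ) (x : Fin 3 → ℝ) :
    grad U ((rot3 φ).mulVec x) = (rot3 φ).mulVec (grad U x) := by
  set Q := rot3 φ with hQ
  set L : (Fin 3 → ℝ) →L[ℝ] (Fin 3 → ℝ) :=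
    LinearMap.toContinuousLinearMap (Matrix.mulVecLin Q) with hL
  have hLa : ∀ v, L v = Q.mulVec v := fun v => rfl
  have hfd : HasFDerivAt (fun v => U (Q.mulVec v))
      ((fderiv ℝ U (Q.mulVec x)).comp L) x := by
    have := ((hU.differentiable (by simp) (Q.mulVec x)).hasFDerivAt).comp x L.hasFDerivAt
    exact this
  have hfun : (fun v => U (Q.mulVec v)) = U := funext (U_invariant U hU hsym φ)
  rw [hfun] at hfd
  have hkey : fderiv ℝ U x = (fderiv ℝ U (Q.mulVec x)).comp L := hfd.fderiv
  have hg : ∀ i, grad U x i = ∑ j, Q j i * grad U (Q.mulVec x) j := by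
    intro i
    have h1 : grad U x i = (fderiv ℝ U (Q.mulVec x)) (Q.mulVec (Pi.single i 1)) := by
      rw [grad, hkey]
      rfl
    rw [h1, fderiv_eq_sum]
    apply Finset.sum_congr rfl
    intro j _
    congr 1
    simp [Matrix.mulVec_single]
  have hgT : grad U x = Qᵀ.mulVec (grad U (Q.mulVec x)) := by
    funext i
    rw [hg i]
    simp [Matrix.mulVec, dotProduct, Matrix.transpose_apply]
  rw [hgT, Matrix.mulVec_mulVec, rot3_mul_transpose, Matrix.one_mulVec]

theorem so2_symmetry_of_newton_euler (A C φ : ℝ) (hA : 0 < A) (hC : 0 < C)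
    (U : (Fin 3 → ℝ) → ℝ) (hU : ContDiff ℝ (⊤ : ℕ∞) U)
    (hsym : ∀ x : Fin 3 → ℝ, x 0 * grad U x 1 - x 1 * grad U x 0 = 0)
    (R P G : ℝ → Fin 3 → ℝ)
    (hR : ∀ t, HasDerivAt R (R t ⨯₃ omegaOf A C (G t) + P t) t)
    (hP : ∀ t, HasDerivAt P (P t ⨯₃ omegaOf A C (G t) - grad U (R t)) t)
    (hG : ∀ t, HasDerivAt G (G t ⨯₃ omegaOf A C (G t) + R t ⨯₃ grad U (R t)) t) :
    (∀ x : Fin 3 → ℝ, grad U ((rot3 φ).mulVec x) = (rot3 φ).mulVec (grad U x)) ∧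
    (∀ t, HasDerivAt (fun s => (rot3 φ).mulVec (R s))
      ((rot3 φ).mulVec (R t) ⨯₃ omegaOf A C ((rot3 φ).mulVec (G t)) +
        (rot3 φ).mulVec (P t)) t) ∧
    (∀ t, HasDerivAt (fun s => (rot3 φ).mulVec (P s))
      ((rot3 φ).mulVec (P t) ⨯₃ omegaOf A C ((rot3 φ).mulVec (G t)) -
        grad U ((rot3 φ).mulVec (R t))) t) ∧
    (∀ t, HasDerivAt (fun s => (rot3 φ).mulVec (G s))
      ((rot3 φ).mulVec (G t) ⨯₃ omegaOf A C ((rot3 φ).mulVec (G t)) +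
        (rot3 φ).mulVec (R t) ⨯₃ grad U ((rot3 φ).mulVec (R t))) t) := by
  have hgrad := grad_equiv U hU hsym φ
  set Q := rot3 φ with hQ
  set L : (Fin 3 → ℝ) →L[ℝ] (Fin 3 → ℝ) :=
    LinearMap.toContinuousLinearMap (Matrix.mulVecLin Q) with hL
  have key : ∀ (f : ℝ → Fin 3 → ℝ) (v : Fin 3 → ℝ) (t : ℝ), HasDerivAt f v t →
      HasDerivAt (fun s => Q.mulVec (f s)) (Q.mulVec v) t := by
    intro f v t hf
    have := L.hasFDerivAt.comp_hasDerivAt t hf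
    exact this
  refine ⟨hgrad, fun t => ?_, fun t => ?_, fun t => ?_⟩
  · have := key R _ t (hR t)
    rw [Matrix.mulVec_add, ← cross_equiv, ← omega_equiv] at this
    exact this
  · have := key P _ t (hP t)
    rw [Matrix.mulVec_sub, ← cross_equiv, ← omega_equiv, ← hgrad] at this
    exact this
  · have := key G _ t (hG t)
    rw [Matrix.mulVec_add, ← cross_equiv, ← cross_equiv, ← omega_equiv, ← hgrad] at this
    exact this
end

section
/- Suppose (R(t),P(t),G(t)) = (A₃(Nt)R₀, A₃(Nt)P₀, A₃(Nt)G₀) is a solution of the Newton–Euler equations Ṙ = R×Ω + P, Ṗ = P×Ω − ∂U/∂R, Ġ = G×Ω + R×∂U/∂R with Ω = I⁻¹G, where A₃(φ) is rotation by angle φ about the third axis and the potential U is axially symmetric. Then, with Ω̃ = I⁻¹G₀ + (0,0,N), the constant vectors satisfy: Ω̃ × R₀ = P₀, Ω̃ × P₀ = −∂U/∂R(R₀), and Ω̃ × G₀ = R₀ × ∂U/∂R(R₀). -/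
open Matrix

lemma rot3_zero_mulVec (v : Fin 3 → ℝ) : (rot3 0).mulVec v = v := by
  funext i; fin_cases i <;>
    simp [rot3, mulVec, dotProduct, Fin.sum_univ_three]

lemma rot3_hasDerivAt (N : ℝ) (v : Fin 3 → ℝ) :
    HasDerivAt (fun s => (rot3 (N * s)).mulVec v) (![0, 0, N] ⨯₃ v) 0 := by
  have key : (fun s => (rot3 (N * s)).mulVec v) =
      fun s => ![Real.cos (N * s) * v 0 - Real.sin (N * s) * v 1,
        Real.sin (N * s) * v 0 + Real.cos (N * s) * v 1, v 2] := by
    funext s i; fin_cases i <;>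
      simp [rot3, mulVec, dotProduct, Fin.sum_univ_three] <;> ring
  rw [key, hasDerivAt_pi]
  have hlin : HasDerivAt (fun s : ℝ => N * s) N 0 := by
    simpa using (hasDerivAt_id (0:ℝ)).const_mul N
  have hc := hlin.cos
  have hs := hlin.sin
  intro i
  fin_cases i
  · have := (hc.mul_const (v 0)).sub (hs.mul_const (v 1))
    simpa [crossProduct, Pi.sub_def] using this
  · have := (hs.mul_const (v 0)).add (hc.mul_const (v 1))
    simpa [crossProduct, Pi.add_def] using this
  · simpa [crossProduct] using (hasDerivAt_const (0:ℝ) (v 2))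

theorem relative_equilibrium_equations (A C N : ℝ) (hA : 0 < A) (hC : 0 < C)
    (U : (Fin 3 → ℝ) → ℝ) (hU : ContDiff ℝ (⊤ : ℕ∞) U)
    (hsym : ∀ x : Fin 3 → ℝ, x 0 * grad U x 1 - x 1 * grad U x 0 = 0)
    (R₀ P₀ G₀ : Fin 3 → ℝ)
    -- the curve t ↦ (A₃(Nt)R₀, A₃(Nt)P₀, A₃(Nt)G₀) solves the Newton–Euler equations
    (hR : ∀ t, HasDerivAt (fun s => (rot3 (N * s)).mulVec R₀)
      ((rot3 (N * t)).mulVec R₀ ⨯₃ omegaOf A C ((rot3 (N * t)).mulVec G₀) +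
        (rot3 (N * t)).mulVec P₀) t)
    (hP : ∀ t, HasDerivAt (fun s => (rot3 (N * s)).mulVec P₀)
      ((rot3 (N * t)).mulVec P₀ ⨯₃ omegaOf A C ((rot3 (N * t)).mulVec G₀) -
        grad U ((rot3 (N * t)).mulVec R₀)) t)
    (hG : ∀ t, HasDerivAt (fun s => (rot3 (N * s)).mulVec G₀)
      ((rot3 (N * t)).mulVec G₀ ⨯₃ omegaOf A C ((rot3 (N * t)).mulVec G₀) +
        (rot3 (N * t)).mulVec R₀ ⨯₃ grad U ((rot3 (N * t)).mulVec R₀)) t) :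
    (omegaOf A C G₀ + ![0, 0, N]) ⨯₃ R₀ = P₀ ∧
    (omegaOf A C G₀ + ![0, 0, N]) ⨯₃ P₀ = -grad U R₀ ∧
    (omegaOf A C G₀ + ![0, 0, N]) ⨯₃ G₀ = R₀ ⨯₃ grad U R₀ := by
  have hR0 := (hR 0).unique (rot3_hasDerivAt N R₀)
  have hP0 := (hP 0).unique (rot3_hasDerivAt N P₀)
  have hG0 := (hG 0).unique (rot3_hasDerivAt N G₀)
  simp only [mul_zero, rot3_zero_mulVec] at hR0 hP0 hG0
  refine ⟨?_, ?_, ?_⟩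
  · funext i
    have h0 := congrFun hR0 i
    fin_cases i <;> simp [crossProduct, omegaOf] at h0 ⊢ <;> linarith
  · funext i
    have h0 := congrFun hP0 i
    fin_cases i <;> simp [crossProduct, omegaOf] at h0 ⊢ <;> linarith
  · funext i
    have h0 := congrFun hG0 i
    fin_cases i <;> simp [crossProduct, omegaOf] at h0 ⊢ <;> linarith
end

section
/- Let U: ℝ³ → ℝ satisfy R₁ U₂ − R₂ U₁ = 0 at R₀, where Uᵢ = ∂U/∂Rᵢ(R₀), and suppose ⟨Ω̃, R₀⟩ (Ω̃ × R₀) = R₀ × ∇U(R₀) for some Ω̃ ∈ ℝ³. Then ⟨Ω̃, R₀⟩ · ⟨Z, Ω̃ × R₀⟩ = 0, where Z = (0,0,1). Hence either ⟨Ω̃, R₀⟩ = 0 (in which case R₀ × ∇U(R₀) = 0, so R₀ is locally central, provided Ω̃ × R₀ ≠ 0), or Ω₁R₂ − Ω₂R₁ = 0. -/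
open Matrix

/-
The third component of `Ω̃ × R₀ = R₀ × ∇U(R₀)`, scaled by `⟨Ω̃, R₀⟩`, is the axial symmetry
expression `R₁U₂ − R₂U₁`, which vanishes; so `⟨Ω̃, R₀⟩ · (Ω̃ × R₀)₃ = 0`. If `⟨Ω̃, R₀⟩ = 0`
the hypothesis collapses to `R₀ × ∇U(R₀) = 0`; otherwise `(Ω̃ × R₀)₃ = Ω₁R₂ − Ω₂R₁` vanishes.
-/

theorem dotProduct_cross_eq_third {R : Type*} [CommRing R] (u v : Fin 3 → R) :
    (![0, 0, 1] : Fin 3 → R) ⬝ᵥ (u ⨯₃ v) = u 0 * v 1 - u 1 * v 0 := by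
  simp [cross_apply, dotProduct, Fin.sum_univ_three]

theorem locally_central_dichotomy (R₀ Ω F : Fin 3 → ℝ)
    -- `F = ∇U(R₀)` satisfies the axial symmetry condition at `R₀`
    (hsym : R₀ 0 * F 1 - R₀ 1 * F 0 = 0)
    (h : (Ω ⬝ᵥ R₀) • (Ω ⨯₃ R₀) = R₀ ⨯₃ F) :
    (Ω ⬝ᵥ R₀) * ((![0, 0, 1] : Fin 3 → ℝ) ⬝ᵥ (Ω ⨯₃ R₀)) = 0 ∧
    ((Ω ⬝ᵥ R₀ = 0 ∧ (Ω ⨯₃ R₀ ≠ 0 → R₀ ⨯₃ F = 0)) ∨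
      Ω 0 * R₀ 1 - Ω 1 * R₀ 0 = 0) := by
  have hz : (Ω ⬝ᵥ R₀) * ((![0, 0, 1] : Fin 3 → ℝ) ⬝ᵥ (Ω ⨯₃ R₀)) = 0 := by
    have h₃ := congrArg ((![0, 0, 1] : Fin 3 → ℝ) ⬝ᵥ ·) h
    simp only [dotProduct_smul, smul_eq_mul, dotProduct_cross_eq_third] at h₃
    rw [dotProduct_cross_eq_third, h₃, hsym]
  refine ⟨hz, ?_⟩
  rcases mul_eq_zero.mp hz with hdot | hthird
  · exact Or.inl ⟨hdot, fun _ => by rw [← h, hdot, zero_smul]⟩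
  · exact Or.inr (by rwa [dotProduct_cross_eq_third] at hthird)
end
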